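/- arXiv:1404.5791 — 3 statements merged into one kernel-verified Lean document; each statement's English description precedes it below -/
import Mathlib

section
/- Let ς : ℝ → ℝ be given with ς(x) > 0 and D ∈ ℝ^{2d} a fixed column vector, A a (2d)×(2d) orthogonal matrix, θ₁ ∈ ℝ, and let H be the symmetric (4+4d)×(4+4d) matrix in block form H = [[0,1,0,0,0,0],[1,0,−1,0,0,0],[0,−1,0,ς,0,0],[0,0,ς,0,0,Dᵀ],[0,0,0,0,0,−Aᵀ/ς],[0,0,0,D,−A/ς,−θ₁ I_{2d}]] (with rows/columns indexed by the variables t, θ, r, τ, v ∈ ℝ^{2d}, Ω ∈ ℝ^{2d}). Then det(H) = ς^{2−4d}. -/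
/-!
Take the Schur complement with respect to the invertible `4 × 4` corner `TL` (of determinant
`ς²`). The coupling block `TR` lives on the `τ`-row only and `(TL⁻¹)_{ττ} = 0`, so the Schur
complement is `BR` itself. Swapping the two block columns of `BR` makes it block triangular with
diagonal blocks `-Aᵀ/ς` and `-A/ς`, hence `det BR = ς^{-4d} (det A)² = ς^{-4d}`.
-/

open Matrix

theorem Equiv.Perm.sign_sumComm_self (α : Type*) [Fintype α] [DecidableEq α] :
    Equiv.Perm.sign (Equiv.sumComm α α) = (-1) ^ Fintype.card α := by
  rw [← Equiv.Perm.sign_eq_sign_of_equiv (Equiv.prodCongrLeft fun _ : α => Equiv.swap false true)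
    _ (Equiv.boolProdEquivSum α) (by rintro ⟨_ | _, a⟩ <;> rfl), Equiv.Perm.sign_prodCongrLeft]
  simp

namespace Matrix

theorem transpose_mul_mul_eq_zero_of_row_support {m n R : Type*} [Fintype m]
    [NonUnitalNonAssocSemiring R] {M : Matrix m m R} {B : Matrix m n R} {k : m}
    (hM : M k k = 0) (hB : ∀ i ≠ k, ∀ j, B i j = 0) : Bᵀ * M * B = 0 := by
  ext p q
  rw [mul_apply, Finset.sum_eq_single k (fun j _ hj => by rw [hB j hj, mul_zero]) (by simp),
    mul_apply,
    Finset.sum_eq_single k (fun i _ hi => by rw [transpose_apply, hB i hi, zero_mul]) (by simp),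
    hM, mul_zero, zero_mul, zero_apply]

section AntiDiagonal

variable {n R : Type*} [Fintype n] [DecidableEq n] [CommRing R]

theorem det_fromBlocks_zero₁₁ (B C D : Matrix n n R) :
    (fromBlocks 0 B C D).det = (-1) ^ Fintype.card n * (B.det * C.det) := by
  have hswap : fromBlocks 0 B C D = (fromBlocks B 0 D C).submatrix id (Equiv.sumComm n n) := by
    ext (i | i) (j | j) <;> rfl
  rw [hswap, det_permute', Equiv.Perm.sign_sumComm_self, det_fromBlocks_zero₁₂]
  push_cast
  ring

theorem det_fromBlocks_zero₁₁_neg_smul_of_mul_transpose_eq_one {c : R} {A : Matrix n n R}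
    (hA : A * Aᵀ = 1) (D : Matrix n n R) :
    (fromBlocks 0 (-(c • Aᵀ)) (-(c • A)) D).det =
      (-1) ^ Fintype.card n * c ^ (2 * Fintype.card n) := by
  have hdetA : A.det * A.det = 1 := by simpa using congrArg det hA
  rw [det_fromBlocks_zero₁₁, ← neg_smul, ← neg_smul, det_smul, det_smul, det_transpose,
    mul_mul_mul_comm, ← mul_pow, neg_mul_neg, hdetA, mul_one, ← sq, ← pow_mul]

end AntiDiagonal

section HessianCorner

variable {K : Type*} [Field K]

def hessianCorner (s : K) : Matrix (Fin 4) (Fin 4) K :=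
  !![0, 1, 0, 0; 1, 0, -1, 0; 0, -1, 0, s; 0, 0, s, 0]

theorem det_hessianCorner (s : K) : (hessianCorner s).det = s ^ 2 := by
  simp [hessianCorner, det_succ_row_zero, Fin.sum_univ_succ, Fin.succAbove]
  ring

theorem hessianCorner_mul_eq_one {s : K} (hs : s ≠ 0) :
    hessianCorner s * !![0, 1, 0, s⁻¹; 1, 0, 0, 0; 0, 0, 0, s⁻¹; s⁻¹, 0, s⁻¹, 0] = 1 := by
  ext i j
  fin_cases i <;> fin_cases j <;> simp [hessianCorner, mul_apply, Fin.sum_univ_four, hs]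

end HessianCorner

end Matrix

/-- Let `ς > 0` be a scalar, `D ∈ ℝ^{2d}` a fixed column vector,
`A` a `(2d)×(2d)` orthogonal matrix, `θ₁ ∈ ℝ`, and let `H` be the symmetric
`(4+4d)×(4+4d)` matrix in block form
`H = [[0,1,0,0,0,0],[1,0,-1,0,0,0],[0,-1,0,ς,0,0],[0,0,ς,0,0,Dᵀ],
      [0,0,0,0,0,-Aᵀ/ς],[0,0,0,D,-A/ς,-θ₁ I_{2d}]]`
(rows/columns indexed by the variables `t, θ, r, τ, v ∈ ℝ^{2d}, Ω ∈ ℝ^{2d}`).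
Then `det H = ς^{2-4d}`. -/
theorem det_hessian_block_matrix {d : ℕ} (ς θ₁ : ℝ) (hς : 0 < ς)
    (D : Fin (2 * d) → ℝ) (A : Matrix (Fin (2 * d)) (Fin (2 * d)) ℝ)
    (hA : A * A.transpose = 1) :
    letI TL : Matrix (Fin 4) (Fin 4) ℝ :=
      !![0, 1, 0, 0; 1, 0, -1, 0; 0, -1, 0, ς; 0, 0, ς, 0]
    letI TR : Matrix (Fin 4) (Fin (2 * d) ⊕ Fin (2 * d)) ℝ :=
      Matrix.of fun i j =>
        Sum.elim (fun _ => (0 : ℝ)) (fun k => if i = (3 : Fin 4) then D k else 0) j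
    letI BR : Matrix (Fin (2 * d) ⊕ Fin (2 * d)) (Fin (2 * d) ⊕ Fin (2 * d)) ℝ :=
      Matrix.fromBlocks 0 (-(ς⁻¹ • A.transpose)) (-(ς⁻¹ • A)) (-(θ₁ • (1 : Matrix (Fin (2 * d)) (Fin (2 * d)) ℝ)))
    letI H : Matrix (Fin 4 ⊕ (Fin (2 * d) ⊕ Fin (2 * d)))
        (Fin 4 ⊕ (Fin (2 * d) ⊕ Fin (2 * d))) ℝ :=
      Matrix.fromBlocks TL TR TR.transpose BR
    H.det = ς ^ ((2 : ℤ) - 4 * (d : ℤ)) := by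
  have hs : ς ≠ 0 := hς.ne'
  let : Invertible (hessianCorner ς) := invertibleOfRightInverse _ _ (hessianCorner_mul_eq_one hs)
  change (fromBlocks (hessianCorner ς) _ _ _).det = _
  -- `rfl` reads off the vanishing `(3, 3)` entry of the explicit inverse.
  rw [det_fromBlocks₁₁, transpose_mul_mul_eq_zero_of_row_support (k := 3) rfl
      (by rintro i hi (j | j) <;> simp [hi]), sub_zero, det_hessianCorner,
    det_fromBlocks_zero₁₁_neg_smul_of_mul_transpose_eq_one hA, Fintype.card_fin,
    (even_two_mul d).neg_one_pow, one_mul, inv_pow, zpow_sub₀ hs, ← div_eq_mul_inv]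
  norm_cast
  ring
end

section
/- In the setting of the previous statement, the derivative of ς along υ is υ(ς) = −ς·(∂_θ ς), and consequently the rescaled 1-form (1/ς)·α is invariant under the flow of υ: L_υ((1/ς)α) = 0. -/
/-- An abstract "Cartan calculus": a commutative ring `F` of smooth functions,
an `F`-module `V` of vector fields, `F`-modules `Ω1`, `Ω2` of 1- and 2-forms,
with the pairing of 1-forms and vector fields, interior product of 2-forms with
vector fields, exterior derivatives `d0 : F → Ω1`, `d1 : Ω1 → Ω2`, and the wedge
product of 1-forms, satisfying the usual Leibniz and contraction rules. -/
structure CartanCalc (F V Ω1 Ω2 : Type*) [CommRing F]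
    [AddCommGroup V] [Module F V] [AddCommGroup Ω1] [Module F Ω1]
    [AddCommGroup Ω2] [Module F Ω2] where
  /-- pairing of a 1-form with a vector field -/
  pair : Ω1 →ₗ[F] V →ₗ[F] F
  /-- interior product of a 2-form with a vector field -/
  ι2 : Ω2 →ₗ[F] V →ₗ[F] Ω1
  /-- exterior derivative of functions -/
  d0 : F →+ Ω1
  /-- exterior derivative of 1-forms -/
  d1 : Ω1 →+ Ω2
  /-- wedge product of 1-forms -/
  wedge : Ω1 → Ω1 → Ω2
  d0_mul : ∀ f g : F, d0 (f * g) = f • d0 g + g • d0 f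
  d1_smul : ∀ (f : F) (a : Ω1), d1 (f • a) = wedge (d0 f) a + f • d1 a
  ι2_wedge : ∀ (v : V) (a b : Ω1), ι2 (wedge a b) v = pair a v • b - pair b v • a
  ι2_pair_self : ∀ (v : V) (ω : Ω2), pair (ι2 ω v) v = 0

/-!
Since `ι_υ ι_υ dα = 0`, contracting `ι_υ dα = dς - (∂_θ ς) α` with `υ` once more gives
`υ(ς) = (∂_θ ς) α(υ) = -ς ∂_θ ς`, and Cartan's formula gives `L_υ α = -(∂_θ ς) α`.
By the Leibniz rule `L_υ (f α) = f L_υ α + υ(f) α`, and `υ(1/ς) = -υ(ς)/ς² = (∂_θ ς)/ς`,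
the two terms of `L_υ ((1/ς) α)` cancel.
-/

namespace CartanCalc

variable {F V Ω1 Ω2 : Type*} [CommRing F] [AddCommGroup V] [Module F V]
  [AddCommGroup Ω1] [Module F Ω1] [AddCommGroup Ω2] [Module F Ω2]
  (C : CartanCalc F V Ω1 Ω2)

def lieDeriv (v : V) (a : Ω1) : Ω1 :=
  C.d0 (C.pair a v) + C.ι2 (C.d1 a) v

theorem d0_one : C.d0 1 = 0 := by
  simpa using C.d0_mul 1 1

theorem pair_d0_eq_of_mul_eq_one {f g : F} (hfg : f * g = 1) (v : V) :
    C.pair (C.d0 g) v = -(g ^ 2 * C.pair (C.d0 f) v) := by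
  have hd : f • C.d0 g + g • C.d0 f = 0 := by
    rw [← C.d0_mul, hfg, d0_one]
  have h := congrArg (fun a => C.pair a v) hd
  simp only [map_add, map_smul, LinearMap.add_apply, LinearMap.smul_apply, smul_eq_mul,
    map_zero, LinearMap.zero_apply] at h
  linear_combination g * h - C.pair (C.d0 g) v * hfg

theorem lieDeriv_smul (v : V) (f : F) (a : Ω1) :
    C.lieDeriv v (f • a) = f • C.lieDeriv v a + C.pair (C.d0 f) v • a := by
  simp only [lieDeriv, map_smul, LinearMap.smul_apply, smul_eq_mul, C.d0_mul, C.d1_smul,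
    map_add, LinearMap.add_apply, C.ι2_wedge]
  module

section Contraction

variable {α : Ω1} {v : V} {s c : F}

theorem pair_d0_eq_of_ι2_d1 (hι : C.ι2 (C.d1 α) v = C.d0 s - c • α) :
    C.pair (C.d0 s) v = c * C.pair α v := by
  have h := C.ι2_pair_self v (C.d1 α)
  rw [hι] at h
  simp only [map_sub, map_smul, LinearMap.sub_apply, LinearMap.smul_apply, smul_eq_mul] at h
  linear_combination h

theorem lieDeriv_eq_of_ι2_d1 (hι : C.ι2 (C.d1 α) v = C.d0 s - c • α)
    (hpair : C.pair α v = -s) : C.lieDeriv v α = -(c • α) := by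
  rw [lieDeriv, hpair, hι, map_neg]
  abel

end Contraction

end CartanCalc

/-- In the setting of Statement 11 (`υ = υʰ - ς·∂/∂θ` with
`α(υʰ) = 0` and `ι(υʰ)(dα) = dʰς = dς - (∂_θ ς)α`), the derivative of `ς` along
`υ` is `υ(ς) = dς(υ) = -ς·(∂_θ ς)`, and consequently the rescaled 1-form
`(1/ς)·α` is invariant under the flow of `υ`:
`L_υ((1/ς)α) = d(ι_υ((1/ς)α)) + ι_υ(d((1/ς)α)) = 0`. -/
theorem rescaled_contact_form_invariant {F V Ω1 Ω2 : Type*} [CommRing F]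
    [AddCommGroup V] [Module F V] [AddCommGroup Ω1] [Module F Ω1]
    [AddCommGroup Ω2] [Module F Ω2]
    (C : CartanCalc F V Ω1 Ω2) (α : Ω1) (θv : V) (ς ςinv : F) (υh : V)
    (hθ : C.pair α θv = 1)
    (hReeb : C.ι2 (C.d1 α) θv = 0)
    (hhor : C.pair α υh = 0)
    (hυh : C.ι2 (C.d1 α) υh = C.d0 ς - C.pair (C.d0 ς) θv • α)
    (hinv : ς * ςinv = 1) :
    C.pair (C.d0 ς) (υh - ς • θv) = -(ς * C.pair (C.d0 ς) θv) ∧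
    C.d0 (C.pair (ςinv • α) (υh - ς • θv))
        + C.ι2 (C.d1 (ςinv • α)) (υh - ς • θv) = 0 := by
  set υ := υh - ς • θv
  have hpair : C.pair α υ = -ς := by
    simp [υ, hθ, hhor]
  have hι : C.ι2 (C.d1 α) υ = C.d0 ς - C.pair (C.d0 ς) θv • α := by
    simp [υ, hReeb, hυh]
  have hderiv : C.pair (C.d0 ς) υ = -(ς * C.pair (C.d0 ς) θv) := by
    rw [C.pair_d0_eq_of_ι2_d1 hι, hpair]
    ring
  refine ⟨hderiv, ?_⟩
  change C.lieDeriv υ (ςinv • α) = 0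
  rw [C.lieDeriv_smul, C.lieDeriv_eq_of_ι2_d1 hι hpair, C.pair_d0_eq_of_mul_eq_one hinv,
    hderiv, smul_neg, smul_smul, ← sub_eq_neg_add, ← sub_smul]
  convert zero_smul F α using 2
  linear_combination (ςinv * C.pair (C.d0 ς) θv) * hinv
end

section
/- Let N : ℝ → ℝ be nondecreasing with the increment bound |N(λ−τ) − N(λ)| ≤ C(1+|τ|)^{m+1} λ^m for λ > 1, and let χ̂ : ℝ → ℝ be nonnegative, integrable, with (1+|τ|)^{m+1} χ̂(τ) integrable and ∫ χ̂ = 2π. If ∫_{ℝ} N(λ−τ) χ̂(τ) dτ = A·λ^{m+1} + O(λ^m) as λ → +∞, then N(λ) = (A/(2π))·λ^{m+1} + O(λ^m). -/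
open MeasureTheory

/-!
Because `∫ χ̂ = 2π`, the smoothed function differs from `2π · N(λ)` by
`∫ (N(λ - τ) - N(λ)) χ̂(τ) dτ`, and the increment bound makes this at most
`C λ^m ∫ (1 + |τ|)^{m+1} χ̂(τ) dτ = O(λ^m)`.
-/

theorem abs_integral_mul_sub_const_mul_le {α : Type*} [MeasurableSpace α] {μ : Measure α}
    {f φ w : α → ℝ} (c B : ℝ) (hφ : ∀ x, 0 ≤ φ x)
    (hfφ : Integrable (fun x => f x * φ x) μ) (hφi : Integrable φ μ)
    (hwφ : Integrable (fun x => w x * φ x) μ) (hfw : ∀ x, |f x - c| ≤ B * w x) :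
    |∫ x, f x * φ x ∂μ - c * ∫ x, φ x ∂μ| ≤ B * ∫ x, w x * φ x ∂μ := by
  rw [← integral_const_mul, ← integral_const_mul, ← integral_sub hfφ (hφi.const_mul c)]
  refine (abs_integral_le_integral_abs).trans
    (integral_mono (hfφ.sub (hφi.const_mul c)).abs (hwφ.const_mul B) fun x => ?_)
  calc |f x * φ x - c * φ x| = |f x - c| * φ x := by
        rw [← sub_mul, abs_mul, abs_of_nonneg (hφ x)]
    _ ≤ B * w x * φ x := mul_le_mul_of_nonneg_right (hfw x) (hφ x)
    _ = B * (w x * φ x) := mul_assoc _ _ _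

theorem abs_sub_div_le_of_abs_sub_le {X a b p E₁ E₂ : ℝ} (hp : 0 < p)
    (h₁ : |X - a * p| ≤ E₁) (h₂ : |X - b| ≤ E₂) : |a - b / p| ≤ (E₁ + E₂) / p := by
  have hscale : a * p - b = (a - b / p) * p := by field_simp
  rw [le_div_iff₀ hp]
  calc |a - b / p| * p = |a * p - b| := by rw [hscale, abs_mul, abs_of_pos hp]
    _ ≤ |a * p - X| + |X - b| := abs_sub_le _ _ _
    _ ≤ E₁ + E₂ := add_le_add (abs_sub_comm X _ ▸ h₁) h₂

theorem tauberian_conclusion_general (N : ℝ → ℝ) (χhat : ℝ → ℝ) (A C m : ℝ)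
    (hincr : ∀ (τ l : ℝ), 1 < l →
      |N (l - τ) - N l| ≤ C * (1 + |τ|) ^ (m + 1) * l ^ m)
    (hχpos : ∀ τ, 0 ≤ χhat τ)
    (hχint : Integrable χhat)
    (hχwint : Integrable fun τ => (1 + |τ|) ^ (m + 1) * χhat τ)
    (hχtot : ∫ τ : ℝ, χhat τ = 2 * Real.pi)
    (hNint : ∀ l : ℝ, Integrable fun τ => N (l - τ) * χhat τ)
    (hasymp : ∃ C₀ Λ : ℝ, ∀ l ≥ Λ,
      |(∫ τ : ℝ, N (l - τ) * χhat τ) - A * l ^ (m + 1)| ≤ C₀ * l ^ m) :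
    ∃ C₁ Λ₁ : ℝ, ∀ l ≥ Λ₁,
      |N l - A / (2 * Real.pi) * l ^ (m + 1)| ≤ C₁ * l ^ m := by
  obtain ⟨C₀, Λ, hΛ⟩ := hasymp
  set K := ∫ τ : ℝ, (1 + |τ|) ^ (m + 1) * χhat τ
  refine ⟨(C * K + C₀) / (2 * Real.pi), max Λ 2, fun l hl => ?_⟩
  have hl1 : 1 < l := one_lt_two.trans_le (le_of_max_le_right hl)
  have hsmooth := abs_integral_mul_sub_const_mul_le (N l) (C * l ^ m) hχpos (hNint l) hχint
    hχwint fun τ => (hincr τ l hl1).trans_eq (by ring)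
  rw [hχtot] at hsmooth
  rw [div_mul_eq_mul_div]
  calc |N l - A * l ^ (m + 1) / (2 * Real.pi)|
      ≤ (C * l ^ m * K + C₀ * l ^ m) / (2 * Real.pi) :=
        abs_sub_div_le_of_abs_sub_le Real.two_pi_pos hsmooth (hΛ l (le_of_max_le_left hl))
    _ = (C * K + C₀) / (2 * Real.pi) * l ^ m := by ring

/-- Let `N : ℝ → ℝ` be nondecreasing with the increment bound
`|N(λ-τ) - N(λ)| ≤ C(1+|τ|)^{m+1} λ^m` for `λ > 1`, and let `χ̂ : ℝ → ℝ` be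
nonnegative, integrable, with `(1+|τ|)^{m+1} χ̂(τ)` integrable and `∫ χ̂ = 2π`.
If `∫_ℝ N(λ-τ) χ̂(τ) dτ = A·λ^{m+1} + O(λ^m)` as `λ → +∞`, then
`N(λ) = (A/(2π))·λ^{m+1} + O(λ^m)`. -/
theorem tauberian_conclusion (N : ℝ → ℝ) (χhat : ℝ → ℝ) (A C m : ℝ)
    (hC : 0 < C) (hm : 0 < m) (hmono : Monotone N)
    (hincr : ∀ (τ l : ℝ), 1 < l →
      |N (l - τ) - N l| ≤ C * (1 + |τ|) ^ (m + 1) * l ^ m)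
    (hχpos : ∀ τ, 0 ≤ χhat τ)
    (hχint : Integrable χhat)
    (hχwint : Integrable fun τ => (1 + |τ|) ^ (m + 1) * χhat τ)
    (hχtot : ∫ τ : ℝ, χhat τ = 2 * Real.pi)
    (hNint : ∀ l : ℝ, Integrable fun τ => N (l - τ) * χhat τ)
    (hasymp : ∃ C₀ Λ : ℝ, ∀ l ≥ Λ,
      |(∫ τ : ℝ, N (l - τ) * χhat τ) - A * l ^ (m + 1)| ≤ C₀ * l ^ m) :
    ∃ C₁ Λ₁ : ℝ, ∀ l ≥ Λ₁,
      |N l - A / (2 * Real.pi) * l ^ (m + 1)| ≤ C₁ * l ^ m :=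
  tauberian_conclusion_general N χhat A C m hincr hχpos hχint hχwint hχtot hNint hasymp
end
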